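/- arXiv:1406.1370 — 4 statements merged into one kernel-verified Lean document; each statement's English description precedes it below -/
import Mathlib

section
/- Let H and K be finite transitive permutation groups on finite sets Δ and Λ respectively, with |Δ| ≥ 2 and |Λ| ≥ 2, fix δ₀ ∈ Δ, λ₀ ∈ Λ, and a positive integer ℓ. Then there exist a set Ω of cardinality ℓ·|Δ|·|Λ|, faithful actions ρ_H : H → Sym(Ω), ρ_K : K → Sym(Ω), and a point ω ∈ Ω such that: (1) the stabiliser of ω in ρ_H(H) is ρ_H(H_{δ₀}) and the stabiliser of ω in ρ_K(K) is ρ_K(K_{λ₀}); (2) ρ_H(H) centralises ρ_K(K)_ω, ρ_K(K) centralises ρ_H(H)_ω, and the subgroups generated are internal direct products ⟨ρ_H(H), ρ_K(K)_ω⟩ = ρ_H(H) × ρ_K(K)_ω and ⟨ρ_H(H)_ω, ρ_K(K)⟩ = ρ_H(H)_ω × ρ_K(K); (3) the group ⟨ρ_H(H), ρ_K(K)⟩ is transitive on Ω. -/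
/-!
Take `Ω = (Δ × Λ) × ℤ/ℓ`, let `H` act on the `Δ`-coordinate and `K` on the `Λ`-coordinate,
and conjugate the `K`-action by the shift `g` that adds `1` on the fibre over `(δ₀, λ₀)` only.
The two untwisted actions commute, and `g` commutes with every element of `H` fixing `δ₀`
and of `K` fixing `λ₀`, because these preserve that fibre; this gives the stabiliser and
centraliser statements. Since `g` preserves the `Δ × Λ`-coordinate, the twisted group still
acts on `Δ × Λ` through `H × K`, so every point can be moved into the fibre over `(δ₀, λ₀)`;
and the commutator of `ρ_K(k)⁻¹` and `ρ_H(h)⁻¹` with `h • δ₀ ≠ δ₀`, `k • λ₀ ≠ λ₀` acts on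
that fibre as `g`, which is transitive on it.
-/

open Equiv Equiv.Perm MulAction
open scoped commutatorElement

namespace Equiv.Perm

variable {α β : Type*}

def prodCongrLeftHom (β : Type*) : Perm α →* Perm (α × β) where
  toFun p := p.prodCongr (Equiv.refl β)
  map_one' := rfl
  map_mul' _ _ := rfl

def prodCongrRightHom (α : Type*) : Perm β →* Perm (α × β) where
  toFun p := (Equiv.refl α).prodCongr p
  map_one' := rfl
  map_mul' _ _ := rfl

@[simp]
theorem prodCongrLeftHom_apply (p : Perm α) (x : α × β) :
    prodCongrLeftHom β p x = (p x.1, x.2) := rfl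

@[simp]
theorem prodCongrRightHom_apply (p : Perm β) (x : α × β) :
    prodCongrRightHom α p x = (x.1, p x.2) := rfl

theorem prodCongrLeftHom_injective [Nonempty β] :
    Function.Injective (prodCongrLeftHom (α := α) β) := fun _ _ hpq =>
  Equiv.ext fun a => congrArg Prod.fst (DFunLike.congr_fun hpq (a, Classical.arbitrary β))

theorem prodCongrRightHom_injective [Nonempty α] :
    Function.Injective (prodCongrRightHom (β := β) α) := fun _ _ hpq =>
  Equiv.ext fun b => congrArg Prod.snd (DFunLike.congr_fun hpq (Classical.arbitrary α, b))

theorem commute_prodExtendRight_prodCongrLeftHom [DecidableEq α] {p : Perm α} {a : α}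
    (hp : p a = a) (e : Perm β) : Commute (prodExtendRight a e) (prodCongrLeftHom β p) := by
  refine Equiv.ext fun ⟨x, y⟩ => ?_
  by_cases hx : x = a
  · subst hx
    simp [hp]
  · have hpx : p x ≠ a := hp ▸ p.injective.ne hx
    simp [prodExtendRight_apply_ne, hx, hpx]

theorem pow_apply_eq_add_of_apply_eq_add_one {X : Type*} {n : ℕ} {p : Perm (X × ZMod n)} {x : X}
    (hp : ∀ c, p (x, c) = (x, c + 1)) (m : ℕ) (c : ZMod n) : (p ^ m) (x, c) = (x, c + m) := by
  induction m with
  | zero => simp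
  | succ m ih => rw [pow_succ', mul_apply, ih, hp, Nat.cast_succ, add_assoc]

end Equiv.Perm

theorem Subgroup.exists_mem_apply_eq_of_forall_exists {α : Type*} {G : Subgroup (Perm α)} (ω : α)
    (h : ∀ x, ∃ p ∈ G, p x = ω) (x y : α) : ∃ p ∈ G, p x = y := by
  obtain ⟨p, hp, rfl⟩ := h x
  obtain ⟨q, hq, hqy⟩ := h y
  exact ⟨q⁻¹ * p, mul_mem (inv_mem hq) hp, by rw [mul_apply, inv_eq_iff_eq, hqy]⟩

namespace ShiftedProduct

variable {H K Δ Λ : Type*} [Group H] [Group K] [MulAction H Δ] [MulAction K Λ] {n : ℕ}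

variable (Λ n) in
def actH : H →* Perm ((Δ × Λ) × ZMod n) :=
  (prodCongrLeftHom (ZMod n)).comp ((prodCongrLeftHom Λ).comp (toPermHom H Δ))

variable (Δ n) in
def actKUntwisted : K →* Perm ((Δ × Λ) × ZMod n) :=
  (prodCongrLeftHom (ZMod n)).comp ((prodCongrRightHom Δ).comp (toPermHom K Λ))

@[simp]
theorem actH_apply (h : H) (a : Δ) (b : Λ) (c : ZMod n) :
    actH Λ n h ((a, b), c) = ((h • a, b), c) := rfl

@[simp]
theorem actKUntwisted_apply (k : K) (a : Δ) (b : Λ) (c : ZMod n) :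
    actKUntwisted Δ n k ((a, b), c) = ((a, k • b), c) := rfl

theorem fst_actH_apply (h : H) (x : (Δ × Λ) × ZMod n) :
    (actH Λ n h x).1 = (h • x.1.1, x.1.2) := rfl

theorem fst_actKUntwisted_apply (k : K) (x : (Δ × Λ) × ZMod n) :
    (actKUntwisted Δ n k x).1 = (x.1.1, k • x.1.2) := rfl

theorem actH_apply_eq_self_iff (h : H) (a : Δ) (b : Λ) (c : ZMod n) :
    actH Λ n h ((a, b), c) = ((a, b), c) ↔ h • a = a := by
  simp

theorem commute_actH_actKUntwisted (h : H) (k : K) :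
    Commute (actH Λ n h) (actKUntwisted Δ n k) :=
  Equiv.ext fun _ => rfl

theorem actH_injective [FaithfulSMul H Δ] [Nonempty Λ] :
    Function.Injective (actH (H := H) (Δ := Δ) Λ n) :=
  prodCongrLeftHom_injective.comp (prodCongrLeftHom_injective.comp toPerm_injective)

variable [DecidableEq Δ] [DecidableEq Λ] {δ₀ : Δ} {lam₀ : Λ}

variable (n δ₀ lam₀) in
def shift : Perm ((Δ × Λ) × ZMod n) :=
  prodExtendRight (δ₀, lam₀) (Equiv.addRight 1)

variable (n δ₀ lam₀) in
def actK : K →* Perm ((Δ × Λ) × ZMod n) :=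
  (MulAut.conj (shift n δ₀ lam₀)).toMonoidHom.comp (actKUntwisted Δ n)

theorem actK_apply (k : K) (x : (Δ × Λ) × ZMod n) :
    actK n δ₀ lam₀ k x = shift n δ₀ lam₀ (actKUntwisted Δ n k ((shift n δ₀ lam₀)⁻¹ x)) := rfl

theorem shift_apply_base (c : ZMod n) : shift n δ₀ lam₀ ((δ₀, lam₀), c) = ((δ₀, lam₀), c + 1) :=
  prodExtendRight_apply_eq _ _ _

theorem shift_apply_of_ne {x : Δ × Λ} (hx : x ≠ (δ₀, lam₀)) (c : ZMod n) :
    shift n δ₀ lam₀ (x, c) = (x, c) :=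
  prodExtendRight_apply_ne _ hx _

theorem shift_inv_apply_of_ne {x : Δ × Λ} (hx : x ≠ (δ₀, lam₀)) (c : ZMod n) :
    (shift n δ₀ lam₀)⁻¹ (x, c) = (x, c) :=
  inv_eq_iff_eq.mpr (shift_apply_of_ne hx c).symm

theorem fst_shift_apply (x : (Δ × Λ) × ZMod n) : (shift n δ₀ lam₀ x).1 = x.1 :=
  fst_prodExtendRight _ _ _

theorem fst_shift_inv_apply (x : (Δ × Λ) × ZMod n) : ((shift n δ₀ lam₀)⁻¹ x).1 = x.1 :=
  (fst_shift_apply _).symm.trans (congrArg Prod.fst (apply_symm_apply _ x))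

theorem fst_actK_apply (k : K) (x : (Δ × Λ) × ZMod n) :
    (actK n δ₀ lam₀ k x).1 = (x.1.1, k • x.1.2) := by
  rw [actK_apply, fst_shift_apply, fst_actKUntwisted_apply, fst_shift_inv_apply]

theorem actK_apply_of_ne {a : Δ} (ha : a ≠ δ₀) (k : K) (b : Λ) (c : ZMod n) :
    actK n δ₀ lam₀ k ((a, b), c) = ((a, k • b), c) := by
  rw [actK_apply, shift_inv_apply_of_ne (by simp [ha]), actKUntwisted_apply,
    shift_apply_of_ne (by simp [ha])]

theorem actK_eq_actKUntwisted {k : K} (hk : k • lam₀ = lam₀) :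
    actK n δ₀ lam₀ k = actKUntwisted Δ n k :=
  mul_inv_eq_of_eq_mul
    (commute_prodExtendRight_prodCongrLeftHom (p := prodCongrRightHom Δ (toPerm k))
      (by simp [hk]) _).eq

theorem actK_apply_base_eq_self_iff (k : K) (c : ZMod n) :
    actK n δ₀ lam₀ k ((δ₀, lam₀), c) = ((δ₀, lam₀), c) ↔ k • lam₀ = lam₀ := by
  refine ⟨fun hk => ?_, fun hk => by simp [actK_eq_actKUntwisted hk, hk]⟩
  simpa [fst_actK_apply] using congrArg (fun x => x.1.2) hk

theorem commute_actH_shift {h : H} (hh : h • δ₀ = δ₀) :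
    Commute (actH Λ n h) (shift n δ₀ lam₀) :=
  (commute_prodExtendRight_prodCongrLeftHom (p := prodCongrLeftHom Λ (toPerm h))
    (by simp [hh]) _).symm

theorem commute_actH_actK_of_smul_δ₀_eq {h : H} (hh : h • δ₀ = δ₀) (k : K) :
    Commute (actH Λ n h) (actK n δ₀ lam₀ k) :=
  have hg := commute_actH_shift (lam₀ := lam₀) (n := n) hh
  (hg.mul_right (commute_actH_actKUntwisted h k)).mul_right hg.inv_right

theorem commute_actH_actK_of_smul_lam₀_eq (h : H) {k : K} (hk : k • lam₀ = lam₀) :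
    Commute (actH Λ n h) (actK n δ₀ lam₀ k) := by
  rw [actK_eq_actKUntwisted hk]
  exact commute_actH_actKUntwisted h k

theorem actK_injective [FaithfulSMul K Λ] :
    Function.Injective (actK (K := K) (Λ := Λ) n δ₀ lam₀) :=
  have : Nonempty Δ := ⟨δ₀⟩
  (MulAut.conj _).injective.comp (prodCongrLeftHom_injective.comp
    (prodCongrRightHom_injective.comp toPerm_injective))

theorem range_actH_inf_range_actK [FaithfulSMul K Λ] :
    (actH (H := H) (Δ := Δ) Λ n).range ⊓ (actK (K := K) (Λ := Λ) n δ₀ lam₀).range = ⊥ := by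
  rw [eq_bot_iff]
  rintro _ ⟨⟨h, rfl⟩, ⟨k, hk⟩⟩
  have hk1 : k = 1 := eq_of_smul_eq_smul fun b => by
    rw [one_smul]
    simpa [fst_actK_apply] using congrArg (fun x => x.1.2) (DFunLike.congr_fun hk ((δ₀, b), 0))
  rw [Subgroup.mem_bot, ← hk, hk1, map_one]

/-- Starting from `((δ₀, λ₀), c)` the four factors pass through `((h • δ₀, λ₀), c)`,
`((h • δ₀, k • λ₀), c)` and `((δ₀, k • λ₀), c)`; only the last one meets the fibre where `shift`
acts. -/
theorem commutator_actK_actH_apply_base {h : H} {k : K} (hh : h • δ₀ ≠ δ₀)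
    (hk : k • lam₀ ≠ lam₀) (c : ZMod n) :
    ⁅actK n δ₀ lam₀ k⁻¹, actH Λ n h⁻¹⁆ ((δ₀, lam₀), c) = ((δ₀, lam₀), c + 1) := by
  simp only [commutatorElement_def, ← map_inv, inv_inv, mul_apply, actH_apply,
    actK_apply_of_ne hh, inv_smul_smul]
  rw [actK_apply, shift_inv_apply_of_ne (by simpa using hk), actKUntwisted_apply, inv_smul_smul,
    shift_apply_base]

theorem exists_mem_sup_forall_apply_base_eq_add_one [IsPretransitive H Δ] [IsPretransitive K Λ]
    [Nontrivial Δ] [Nontrivial Λ] :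
    ∃ t ∈ (actH (H := H) (Δ := Δ) Λ n).range ⊔ (actK (K := K) (Λ := Λ) n δ₀ lam₀).range,
      ∀ c, t ((δ₀, lam₀), c) = ((δ₀, lam₀), c + 1) := by
  obtain ⟨δ₁, hδ₁⟩ := exists_ne δ₀
  obtain ⟨h, hh⟩ := exists_smul_eq H δ₀ δ₁
  obtain ⟨lam₁, hlam₁⟩ := exists_ne lam₀
  obtain ⟨k, hk⟩ := exists_smul_eq K lam₀ lam₁
  refine ⟨⁅actK n δ₀ lam₀ k⁻¹, actH Λ n h⁻¹⁆, ?_,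
    commutator_actK_actH_apply_base (hh ▸ hδ₁) (hk ▸ hlam₁)⟩
  rw [commutatorElement_def]
  refine mul_mem (mul_mem (mul_mem ?_ ?_) (inv_mem ?_)) (inv_mem ?_)
  · exact Subgroup.mem_sup_right ⟨_, rfl⟩
  · exact Subgroup.mem_sup_left ⟨_, rfl⟩
  · exact Subgroup.mem_sup_right ⟨_, rfl⟩
  · exact Subgroup.mem_sup_left ⟨_, rfl⟩

theorem exists_mem_sup_apply_eq_base [IsPretransitive H Δ] [IsPretransitive K Λ]
    [Nontrivial Δ] [Nontrivial Λ] [NeZero n] (x : (Δ × Λ) × ZMod n) :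
    ∃ p ∈ (actH (H := H) (Δ := Δ) Λ n).range ⊔ (actK (K := K) (Λ := Λ) n δ₀ lam₀).range,
      p x = ((δ₀, lam₀), 0) := by
  obtain ⟨h, hh⟩ := exists_smul_eq H x.1.1 δ₀
  obtain ⟨k, hk⟩ := exists_smul_eq K x.1.2 lam₀
  set move : Perm ((Δ × Λ) × ZMod n) := actH Λ n h * actK n δ₀ lam₀ k
  have hmove : move x = ((δ₀, lam₀), (move x).2) :=
    Prod.ext (by rw [mul_apply, fst_actH_apply, fst_actK_apply, hh, hk]) rfl
  obtain ⟨t, ht, ht_apply⟩ := exists_mem_sup_forall_apply_base_eq_add_one (H := H) (K := K)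
    (n := n) (δ₀ := δ₀) (lam₀ := lam₀)
  obtain ⟨m, hm⟩ := ZMod.natCast_zmod_surjective (-(move x).2)
  refine ⟨t ^ m * move, mul_mem (pow_mem ht m)
    (mul_mem (Subgroup.mem_sup_left ⟨h, rfl⟩) (Subgroup.mem_sup_right ⟨k, rfl⟩)), ?_⟩
  rw [mul_apply, hmove, pow_apply_eq_add_of_apply_eq_add_one ht_apply, hm, add_neg_cancel]

end ShiftedProduct

open ShiftedProduct in
/-- Lemma 4.1: for transitive `H`, `K` on `Δ`, `Λ` with `|Δ|,|Λ| ≥ 2`, points `δ₀, lam₀` and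
`ℓ ≥ 1`, there are faithful actions of `H` and `K` on a set `Ω` of size `ℓ|Δ||Λ|` and a point
`ω` with the stated stabiliser, centralising and transitivity properties. -/
theorem stmt4 {H K Δ Λ : Type} [Group H] [Group K] [Fintype Δ] [Fintype Λ]
    [MulAction H Δ] [MulAction K Λ] [FaithfulSMul H Δ] [FaithfulSMul K Λ]
    [MulAction.IsPretransitive H Δ] [MulAction.IsPretransitive K Λ]
    (hΔ : 2 ≤ Fintype.card Δ) (hΛ : 2 ≤ Fintype.card Λ)
    (δ₀ : Δ) (lam₀ : Λ) (ℓ : ℕ) (hℓ : 0 < ℓ) :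
    ∃ (Ω : Type) (instΩ : Fintype Ω) (ρH : H →* Equiv.Perm Ω) (ρK : K →* Equiv.Perm Ω) (ω : Ω),
      Fintype.card Ω = ℓ * Fintype.card Δ * Fintype.card Λ ∧
      Function.Injective ρH ∧ Function.Injective ρK ∧
      (∀ h : H, ρH h ω = ω ↔ h ∈ MulAction.stabilizer H δ₀) ∧
      (∀ k : K, ρK k ω = ω ↔ k ∈ MulAction.stabilizer K lam₀) ∧
      (∀ (h : H) (k : K), ρK k ω = ω → Commute (ρH h) (ρK k)) ∧
      (∀ (h : H) (k : K), ρH h ω = ω → Commute (ρH h) (ρK k)) ∧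
      ρH.range ⊓ ρK.range = ⊥ ∧
      (∀ x y : Ω, ∃ p ∈ ρH.range ⊔ ρK.range, p x = y) := by
  classical
  have : NeZero ℓ := ⟨hℓ.ne'⟩
  have : Nontrivial Δ := Fintype.one_lt_card_iff_nontrivial.mp hΔ
  have : Nontrivial Λ := Fintype.one_lt_card_iff_nontrivial.mp hΛ
  refine ⟨(Δ × Λ) × ZMod ℓ, inferInstance, actH Λ ℓ, actK ℓ δ₀ lam₀, ((δ₀, lam₀), 0),
    by simp [ZMod.card]; ring, actH_injective, actK_injective,
    fun h => (actH_apply_eq_self_iff h _ _ _).trans mem_stabilizer_iff.symm,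
    fun k => (actK_apply_base_eq_self_iff k _).trans mem_stabilizer_iff.symm,
    fun h k hk => commute_actH_actK_of_smul_lam₀_eq h ((actK_apply_base_eq_self_iff k _).mp hk),
    fun h k hh => commute_actH_actK_of_smul_δ₀_eq ((actH_apply_eq_self_iff h _ _ _).mp hh) k,
    range_actH_inf_range_actK,
    Subgroup.exists_mem_apply_eq_of_forall_exists _ exists_mem_sup_apply_eq_base⟩
end

section
/- Let G be a group of permutations of the set Ω = Δ × Λ × ℤ/ℓℤ generated by the image of H acting on the first coordinate and the g-conjugate of the image of K acting on the second coordinate, where g fixes (δ,λ,i) if (δ,λ) ≠ (δ₀,λ₀) and sends (δ₀,λ₀,i) to (δ₀,λ₀,i+1). If H is transitive on Δ with |Δ| ≥ 2 and K is transitive on Λ with |Λ| ≥ 2, then G is transitive on Ω. -/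
/-!
Outside the fibre `{(δ₀, λ₀)} × ℤ/ℓℤ` the permutation `g` is the identity, so there `ρK k` is just
`k` acting on the second coordinate; on that fibre it also adds `1` to the third coordinate as soon
as `k` moves `λ₀`. Leaving the fibre with such a `k`, moving `δ₀` away with `H`, bringing the
second coordinate back to `λ₀` with `K` and returning to `δ₀` with `H` therefore takes
`(δ₀, λ₀, i)` to `(δ₀, λ₀, i + 1)`. Hence all points of the fibre lie in one orbit, and every
point `(δ, λ, i)` is joined to `(δ₀, λ₀, i)` by moving `δ` off `δ₀`, then `λ` to `λ₀`, then `δ` to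
`δ₀`.
-/

open MulAction Equiv

theorem Equiv.Perm.conj_apply_of_apply_eq_self {α : Type*} {g π : Perm α} {x : α}
    (hx : g x = x) (hπx : g (π x) = π x) : (g⁻¹ * π * g) x = π x := by
  rw [Perm.mul_apply, Perm.mul_apply, hx, Perm.inv_eq_iff_eq, hπx]

section

variable {H K Δ Λ L : Type*} [Group H] [Group K] [MulAction H Δ] [MulAction K Λ]
  {δ₀ : Δ} {lam₀ : Λ}

theorem conj_apply_of_fst_ne {g : Perm (Δ × Λ × L)}
    (hg : ∀ (δ : Δ) (lam : Λ) (i : L), (δ, lam) ≠ (δ₀, lam₀) → g (δ, lam, i) = (δ, lam, i))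
    {ρ' : K →* Perm (Δ × Λ × L)}
    (hρ' : ∀ (k : K) (δ : Δ) (lam : Λ) (i : L), ρ' k (δ, lam, i) = (δ, k • lam, i))
    (k : K) {δ : Δ} (hδ : δ ≠ δ₀) (lam : Λ) (i : L) :
    (g⁻¹ * ρ' k * g) (δ, lam, i) = (δ, k • lam, i) := by
  have hfix : ∀ lam' : Λ, g (δ, lam', i) = (δ, lam', i) := fun lam' ↦ hg _ _ _ (by simp [hδ])
  rw [Perm.conj_apply_of_apply_eq_self (hfix lam) (by rw [hρ', hfix]), hρ']

theorem conj_apply_base_of_smul_ne [Add L] [One L] {g : Perm (Δ × Λ × L)}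
    (hg1 : ∀ (δ : Δ) (lam : Λ) (i : L), (δ, lam) ≠ (δ₀, lam₀) → g (δ, lam, i) = (δ, lam, i))
    (hg2 : ∀ i : L, g (δ₀, lam₀, i) = (δ₀, lam₀, i + 1))
    {ρ' : K →* Perm (Δ × Λ × L)}
    (hρ' : ∀ (k : K) (δ : Δ) (lam : Λ) (i : L), ρ' k (δ, lam, i) = (δ, k • lam, i))
    {k : K} (hk : k • lam₀ ≠ lam₀) (i : L) :
    (g⁻¹ * ρ' k * g) (δ₀, lam₀, i) = (δ₀, k • lam₀, i + 1) := by
  rw [Perm.mul_apply, Perm.mul_apply, hg2, hρ', Perm.inv_eq_iff_eq, hg1 _ _ _ (by simp [hk])]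

variable [IsPretransitive H Δ] [IsPretransitive K Λ]

theorem orbit_sup_range_eq_orbit_fiber
    (ρH : H →* Perm (Δ × Λ × L))
    (hρH : ∀ (h : H) (δ : Δ) (lam : Λ) (i : L), ρH h (δ, lam, i) = (h • δ, lam, i))
    (ρK : K →* Perm (Δ × Λ × L))
    (hK : ∀ (k : K) (δ : Δ) (lam : Λ) (i : L), δ ≠ δ₀ → ρK k (δ, lam, i) = (δ, k • lam, i))
    {δ₁ : Δ} (hδ₁ : δ₁ ≠ δ₀) (δ : Δ) (lam : Λ) (i : L) :
    orbit ↥(ρH.range ⊔ ρK.range) (δ, lam, i) = orbit ↥(ρH.range ⊔ ρK.range) (δ₀, lam₀, i) := by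
  obtain ⟨h₁, hh₁⟩ := exists_smul_eq H δ δ₁
  obtain ⟨k, hk⟩ := exists_smul_eq K lam lam₀
  obtain ⟨h₂, hh₂⟩ := exists_smul_eq H δ₁ δ₀
  have hmem : ρH h₂ * ρK k * ρH h₁ ∈ ρH.range ⊔ ρK.range :=
    mul_mem (mul_mem (Subgroup.mem_sup_left ⟨h₂, rfl⟩)
      (Subgroup.mem_sup_right ⟨k, rfl⟩)) (Subgroup.mem_sup_left ⟨h₁, rfl⟩)
  refine orbit_eq_iff.mpr (mem_orbit_symm.mp ⟨⟨_, hmem⟩, ?_⟩)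
  simp only [Subgroup.mk_smul, Perm.smul_def, Perm.mul_apply, hρH, hh₁, hK k δ₁ lam i hδ₁, hk, hh₂]

theorem periodic_orbit_sup_range_base [Add L] [One L]
    (ρH : H →* Perm (Δ × Λ × L))
    (hρH : ∀ (h : H) (δ : Δ) (lam : Λ) (i : L), ρH h (δ, lam, i) = (h • δ, lam, i))
    (ρK : K →* Perm (Δ × Λ × L))
    (hK1 : ∀ (k : K) (δ : Δ) (lam : Λ) (i : L), δ ≠ δ₀ → ρK k (δ, lam, i) = (δ, k • lam, i))
    (hK2 : ∀ (k : K) (i : L), k • lam₀ ≠ lam₀ → ρK k (δ₀, lam₀, i) = (δ₀, k • lam₀, i + 1))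
    {δ₁ : Δ} (hδ₁ : δ₁ ≠ δ₀) {lam₁ : Λ} (hlam₁ : lam₁ ≠ lam₀) :
    Function.Periodic (fun i : L ↦ orbit ↥(ρH.range ⊔ ρK.range) (δ₀, lam₀, i)) 1 := by
  intro i
  obtain ⟨k₁, hk₁⟩ := exists_smul_eq K lam₀ lam₁
  obtain ⟨h₂, hh₂⟩ := exists_smul_eq H δ₀ δ₁
  obtain ⟨k₂, hk₂⟩ := exists_smul_eq K lam₁ lam₀
  obtain ⟨h₃, hh₃⟩ := exists_smul_eq H δ₁ δ₀
  have hmem : ρH h₃ * ρK k₂ * ρH h₂ * ρK k₁ ∈ ρH.range ⊔ ρK.range :=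
    mul_mem (mul_mem (mul_mem (Subgroup.mem_sup_left ⟨h₃, rfl⟩)
      (Subgroup.mem_sup_right ⟨k₂, rfl⟩)) (Subgroup.mem_sup_left ⟨h₂, rfl⟩))
      (Subgroup.mem_sup_right ⟨k₁, rfl⟩)
  have hleave : ρK k₁ (δ₀, lam₀, i) = (δ₀, lam₁, i + 1) := by
    rw [hK2 k₁ i (hk₁ ▸ hlam₁), hk₁]
  refine orbit_eq_iff.mpr ⟨⟨_, hmem⟩, ?_⟩
  simp only [Subgroup.mk_smul, Perm.smul_def, Perm.mul_apply, hleave, hρH, hh₂,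
    hK1 k₂ δ₁ lam₁ (i + 1) hδ₁, hk₂, hh₃]

theorem isPretransitive_sup_range {ℓ : ℕ} [Nontrivial Δ] [Nontrivial Λ]
    (ρH : H →* Perm (Δ × Λ × ZMod ℓ))
    (hρH : ∀ (h : H) (δ : Δ) (lam : Λ) (i : ZMod ℓ), ρH h (δ, lam, i) = (h • δ, lam, i))
    (ρK : K →* Perm (Δ × Λ × ZMod ℓ))
    (hK1 : ∀ (k : K) (δ : Δ) (lam : Λ) (i : ZMod ℓ), δ ≠ δ₀ → ρK k (δ, lam, i) = (δ, k • lam, i))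
    (hK2 : ∀ (k : K) (i : ZMod ℓ), k • lam₀ ≠ lam₀ →
      ρK k (δ₀, lam₀, i) = (δ₀, k • lam₀, i + 1)) :
    IsPretransitive ↥(ρH.range ⊔ ρK.range) (Δ × Λ × ZMod ℓ) := by
  obtain ⟨δ₁, hδ₁⟩ := exists_ne δ₀
  obtain ⟨lam₁, hlam₁⟩ := exists_ne lam₀
  have hperiodic := periodic_orbit_sup_range_base ρH hρH ρK hK1 hK2 hδ₁ hlam₁
  rw [isPretransitive_iff_orbit_eq_univ (δ₀, lam₀, 0), Set.eq_univ_iff_forall]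
  rintro ⟨δ, lam, i⟩
  obtain ⟨n, rfl⟩ := ZMod.intCast_surjective i
  rw [← orbit_eq_iff, orbit_sup_range_eq_orbit_fiber ρH hρH ρK hK1 hδ₁, ← mul_one (n : ZMod ℓ)]
  exact hperiodic.int_mul_eq n

end

theorem stmt5_general {H K Δ Λ : Type} [Group H] [Group K] [Fintype Δ] [Fintype Λ]
    [MulAction H Δ] [MulAction K Λ]
    [MulAction.IsPretransitive H Δ] [MulAction.IsPretransitive K Λ]
    (hΔ : 2 ≤ Fintype.card Δ) (hΛ : 2 ≤ Fintype.card Λ)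
    (δ₀ : Δ) (lam₀ : Λ) (ℓ : ℕ)
    (g : Equiv.Perm (Δ × Λ × ZMod ℓ))
    (hg1 : ∀ (δ : Δ) (lam : Λ) (i : ZMod ℓ), (δ, lam) ≠ (δ₀, lam₀) → g (δ, lam, i) = (δ, lam, i))
    (hg2 : ∀ i : ZMod ℓ, g (δ₀, lam₀, i) = (δ₀, lam₀, i + 1))
    (ρH : H →* Equiv.Perm (Δ × Λ × ZMod ℓ))
    (hρH : ∀ (h : H) (δ : Δ) (lam : Λ) (i : ZMod ℓ), ρH h (δ, lam, i) = (h • δ, lam, i))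
    (ρ' : K →* Equiv.Perm (Δ × Λ × ZMod ℓ))
    (hρ' : ∀ (k : K) (δ : Δ) (lam : Λ) (i : ZMod ℓ), ρ' k (δ, lam, i) = (δ, k • lam, i))
    (ρK : K →* Equiv.Perm (Δ × Λ × ZMod ℓ))
    (hρK : ∀ k : K, ρK k = g⁻¹ * ρ' k * g) :
    ∀ x y : Δ × Λ × ZMod ℓ, ∃ p ∈ ρH.range ⊔ ρK.range, p x = y := by
  have : Nontrivial Δ := Fintype.one_lt_card_iff_nontrivial.mp hΔ
  have : Nontrivial Λ := Fintype.one_lt_card_iff_nontrivial.mp hΛ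
  have hK1 : ∀ (k : K) (δ : Δ) (lam : Λ) (i : ZMod ℓ), δ ≠ δ₀ →
      ρK k (δ, lam, i) = (δ, k • lam, i) := fun k _ lam i hδ ↦ by
    rw [hρK]
    exact conj_apply_of_fst_ne hg1 hρ' k hδ lam i
  have hK2 : ∀ (k : K) (i : ZMod ℓ), k • lam₀ ≠ lam₀ →
      ρK k (δ₀, lam₀, i) = (δ₀, k • lam₀, i + 1) := fun k i hk ↦ by
    rw [hρK]
    exact conj_apply_base_of_smul_ne hg1 hg2 hρ' hk i
  intro x y
  obtain ⟨⟨p, hp⟩, hpxy⟩ := (isPretransitive_sup_range ρH hρH ρK hK1 hK2).exists_smul_eq x y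
  exact ⟨p, hp, hpxy⟩

/-- Transitivity of `⟨ρ_H(H), ρ_K(K)⟩` on `Ω = Δ × Λ × ℤ/ℓℤ`, where `H` acts on the first
coordinate and `K` acts on the second coordinate conjugated by the permutation `g`. -/
theorem stmt5 {H K Δ Λ : Type} [Group H] [Group K] [Fintype Δ] [Fintype Λ]
    [MulAction H Δ] [MulAction K Λ]
    [MulAction.IsPretransitive H Δ] [MulAction.IsPretransitive K Λ]
    (hΔ : 2 ≤ Fintype.card Δ) (hΛ : 2 ≤ Fintype.card Λ)
    (δ₀ : Δ) (lam₀ : Λ) (ℓ : ℕ) (hℓ : 0 < ℓ)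
    (g : Equiv.Perm (Δ × Λ × ZMod ℓ))
    (hg1 : ∀ (δ : Δ) (lam : Λ) (i : ZMod ℓ), (δ, lam) ≠ (δ₀, lam₀) → g (δ, lam, i) = (δ, lam, i))
    (hg2 : ∀ i : ZMod ℓ, g (δ₀, lam₀, i) = (δ₀, lam₀, i + 1))
    (ρH : H →* Equiv.Perm (Δ × Λ × ZMod ℓ))
    (hρH : ∀ (h : H) (δ : Δ) (lam : Λ) (i : ZMod ℓ), ρH h (δ, lam, i) = (h • δ, lam, i))
    (ρ' : K →* Equiv.Perm (Δ × Λ × ZMod ℓ))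
    (hρ' : ∀ (k : K) (δ : Δ) (lam : Λ) (i : ZMod ℓ), ρ' k (δ, lam, i) = (δ, k • lam, i))
    (ρK : K →* Equiv.Perm (Δ × Λ × ZMod ℓ))
    (hρK : ∀ k : K, ρK k = g⁻¹ * ρ' k * g) :
    ∀ x y : Δ × Λ × ZMod ℓ, ∃ p ∈ ρH.range ⊔ ρK.range, p x = y :=
  stmt5_general hΔ hΛ δ₀ lam₀ ℓ g hg1 hg2 ρH hρH ρ' hρ' ρK hρK
end

section
/- Let k ≥ 3 and let L₁, …, L_k be nontrivial finite transitive permutation groups, with L₁ not regular. Then for every integer c there exists a rank-k faithful amalgam of permutation type [L₁, …, L_k] whose Borel subgroup has order at least c. -/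
/-!
Let `H_i` be a point stabiliser of `L_i`, so that `L_i` acts on `L_i ⧸ H_i` as on its orbit and
`H_i` is core-free. Put `Ω = ℤ/ℓ × L₂/H₂ × L₃/H₃`, let `L₃` act on the last factor and `L₂` on
the middle one, moving the `ℤ/ℓ`-coordinate by a coboundary that is constant along `H₂`- and
`H₃`-orbits. Then the stabiliser of each of `L₂`, `L₃` commutes with the other group, and
`⟨L₂, L₃⟩` is transitive on `Ω`. The Borel subgroup is
`B = ((Ω → H₁) ⋊ (H₂ × H₃)) × ∏_{j > 3} H_j`, and `P_i` enlarges one factor of `B` to `L_i`: the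
coordinate of `Ω → H₁` at the base point for `i = 1`, the group `H₂` or `H₃` (still acting on `Ω`)
for `i = 2, 3`, and `H_j` for `j > 3`. In each case `B` is the preimage of `H_i` under a
surjection `P_i → L_i`, which gives the permutation type, and a subgroup of `B` normal in `P_i`
maps to a normal subgroup of `L_i` inside `H_i`, hence to `1`. A subgroup normal in every `P_i`
therefore lies in `Ω → H₁`, vanishes at the base point and is invariant under `L₂` and `L₃`,
so it is trivial. Finally `|B| ≥ |H₁|^|Ω| > ℓ` because `L₁` is not regular.
-/

open MulAction SemidirectProduct

theorem MulAction.normalCore_stabilizer_eq_bot {L Y : Type} [Group L] [MulAction L Y]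
    [FaithfulSMul L Y] [IsPretransitive L Y] (z : Y) : (stabilizer L z).normalCore = ⊥ := by
  refine (Subgroup.eq_bot_iff_forall _).2 fun s hs => eq_of_smul_eq_smul (α := Y) fun w => ?_
  obtain ⟨g, rfl⟩ := MulAction.exists_smul_eq L z w
  have hfix : (g⁻¹ * s * g) • z = z :=
    Subgroup.normalCore_le _ (Subgroup.Normal.conj_mem' inferInstance s hs g)
  calc s • g • z = g • (g⁻¹ * s * g) • z := by simp [mul_smul]
    _ = (1 : L) • g • z := by rw [hfix, one_smul]

theorem nonempty_of_faithfulSMul (L Y : Type) [Group L] [MulAction L Y] [FaithfulSMul L Y]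
    [Nontrivial L] : Nonempty Y := by
  by_contra hY
  obtain ⟨a, b, hab⟩ := exists_pair_ne L
  exact hab (eq_of_smul_eq_smul fun y : Y => (hY ⟨y⟩).elim)

theorem Subgroup.ne_top_of_normalCore_eq_bot {L : Type} [Group L] [Nontrivial L] {H : Subgroup L}
    (hH : H.normalCore = ⊥) : H ≠ ⊤ := by
  rintro rfl
  rw [Subgroup.normalCore_eq_self] at hH
  exact top_ne_bot hH

theorem QuotientGroup.mk_eq_mk_one_iff {L : Type} [Group L] {H : Subgroup L} (g : L) :
    (g : L ⧸ H) = (1 : L) ↔ g ∈ H := by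
  simp [QuotientGroup.eq]

theorem QuotientGroup.smul_eq_mk_one_iff {L : Type} [Group L] {H : Subgroup L} {h : L} (hh : h ∈ H)
    (x : L ⧸ H) : h • x = (1 : L) ↔ x = (1 : L) := by
  induction x using QuotientGroup.induction_on
  simp [QuotientGroup.mk_eq_mk_one_iff, Subgroup.mul_mem_cancel_left H hh]

def MulEquiv.piSplitAt {J : Type} [DecidableEq J] (j : J) (G : J → Type) [∀ i, Group (G i)] :
    (∀ i, G i) ≃* G j × ∀ i : {i // i ≠ j}, G i :=
  { Equiv.piSplitAt j G with map_mul' := fun _ _ => rfl }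

section Product

variable {B D P : Type} [Group B] [Group D] [Group P] {N : Subgroup (B × D)}

theorem Subgroup.Normal.map_fst_of_map_prodMap {f : B →* P}
    (h : (N.map (f.prodMap (MonoidHom.id D))).Normal) :
    ((N.map (MonoidHom.fst B D)).map f).Normal := by
  have := h.map (MonoidHom.fst P D) Prod.fst_surjective
  rw [Subgroup.map_map] at this
  rwa [Subgroup.map_map]

theorem Subgroup.Normal.map_snd_of_map_prodMap {f : D →* P}
    (h : (N.map ((MonoidHom.id B).prodMap f)).Normal) :
    ((N.map (MonoidHom.snd B D)).map f).Normal := by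
  have := h.map (MonoidHom.snd B P) Prod.snd_surjective
  rw [Subgroup.map_map] at this
  rwa [Subgroup.map_map]

theorem Subgroup.eq_bot_of_map_fst_of_map_snd (h₁ : N.map (MonoidHom.fst B D) = ⊥)
    (h₂ : N.map (MonoidHom.snd B D) = ⊥) : N = ⊥ := by
  rw [eq_bot_iff, ← Subgroup.bot_prod_bot, Subgroup.le_prod_iff, h₁, h₂]
  exact ⟨le_rfl, le_rfl⟩

end Product

structure IsPreimageEmbedding {B P L : Type} [Group B] [Group P] [Group L]
    (incl : B →* P) (ψ : P →* L) (H : Subgroup L) : Prop where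
  injective : Function.Injective incl
  surjective : Function.Surjective ψ
  range_eq : incl.range = H.comap ψ

theorem isPreimageEmbedding_subtype {L : Type} [Group L] (H : Subgroup L) :
    IsPreimageEmbedding H.subtype (MonoidHom.id L) H where
  injective := H.subtype_injective
  surjective := Function.surjective_id
  range_eq := by rw [Subgroup.range_subtype, Subgroup.comap_id]

namespace IsPreimageEmbedding

variable {B P L : Type} [Group B] [Group P] [Group L] {incl : B →* P} {ψ : P →* L}
  {H : Subgroup L}

theorem comp_mulEquiv (h : IsPreimageEmbedding incl ψ H) {B' : Type} [Group B'] (e : B' ≃* B) :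
    IsPreimageEmbedding (incl.comp e.toMonoidHom) ψ H where
  injective := h.injective.comp e.injective
  surjective := h.surjective
  range_eq := by
    rw [MonoidHom.range_comp, MonoidHom.range_eq_top.mpr e.surjective, ← MonoidHom.range_eq_map,
      h.range_eq]

theorem prodMap_id (h : IsPreimageEmbedding incl ψ H) (D : Type) [Group D] :
    IsPreimageEmbedding (incl.prodMap (MonoidHom.id D)) (ψ.comp (MonoidHom.fst P D)) H where
  injective := h.injective.prodMap Function.injective_id
  surjective := h.surjective.comp Prod.fst_surjective
  range_eq := by
    rw [MonoidHom.range_prodMap, h.range_eq, MonoidHom.range_eq_top.mpr Function.surjective_id,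
      Subgroup.prod_top, Subgroup.comap_comap]

theorem id_prodMap (h : IsPreimageEmbedding incl ψ H) (C : Type) [Group C] :
    IsPreimageEmbedding ((MonoidHom.id C).prodMap incl) (ψ.comp (MonoidHom.snd C P)) H where
  injective := Function.injective_id.prodMap h.injective
  surjective := h.surjective.comp Prod.snd_surjective
  range_eq := by
    rw [MonoidHom.range_prodMap, h.range_eq, MonoidHom.range_eq_top.mpr Function.surjective_id,
      Subgroup.top_prod, Subgroup.comap_comap]

theorem map_eq_one (h : IsPreimageEmbedding incl ψ H) (hH : H.normalCore = ⊥) {N : Subgroup B}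
    (hN : (N.map incl).Normal) {n : B} (hn : n ∈ N) : ψ (incl n) = 1 := by
  have := hN.map ψ h.surjective
  have hle : (N.map incl).map ψ ≤ H.normalCore := by
    rw [Subgroup.normal_le_normalCore]
    rintro _ ⟨_, ⟨b, -, rfl⟩, rfl⟩
    have hb : incl b ∈ incl.range := ⟨b, rfl⟩
    rwa [h.range_eq] at hb
  exact Subgroup.mem_bot.mp (hH ▸ hle ⟨_, ⟨n, hn, rfl⟩, rfl⟩)

theorem exists_equiv {Y : Type} [MulAction L Y] [IsPretransitive L Y] {z : Y}
    (h : IsPreimageEmbedding incl ψ (stabilizer L z)) :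
    ∃ e : (P ⧸ incl.range) ≃ Y, ∀ (p : P) (x : P ⧸ incl.range), e (p • x) = ψ p • e x := by
  let := MulAction.compHom Y ψ
  have hstab : incl.range = stabilizer P z := h.range_eq
  rw [hstab]
  have hsurj : Function.Surjective (ofQuotientStabilizer P z) := by
    intro w
    obtain ⟨g, hg⟩ := exists_smul_eq L z w
    obtain ⟨p, rfl⟩ := h.surjective g
    exact ⟨p, hg⟩
  exact ⟨Equiv.ofBijective _ ⟨injective_ofQuotientStabilizer P z, hsurj⟩,
    ofQuotientStabilizer_smul P z⟩

end IsPreimageEmbedding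

theorem exists_amalgam_of_pieces {ι B : Type} [Group B] {L Y : ι → Type} [∀ i, Group (L i)]
    [∀ i, MulAction (L i) (Y i)] [∀ i, IsPretransitive (L i) (Y i)] (y : ∀ i, Y i)
    (C : ι → Subgroup B → Prop) (hC : ∀ N, (∀ i, C i N) → N = ⊥)
    (hP : ∀ i, ∃ (P : Type) (_ : Group P) (incl : B →* P) (ψ : P →* L i),
      Finite P ∧ IsPreimageEmbedding incl ψ (stabilizer (L i) (y i)) ∧
      ∀ N : Subgroup B, (N.map incl).Normal → C i N) :
    ∃ (P : ι → Type) (_ : ∀ i, Group (P i)) (incl : ∀ i, B →* P i),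
      (∀ i, Function.Injective (incl i)) ∧ (∀ i, Finite (P i)) ∧
      (∀ N : Subgroup B, (∀ i, (N.map (incl i)).Normal) → N = ⊥) ∧
      (∀ i, ∃ (e : (P i ⧸ (incl i).range) ≃ Y i) (ψ : P i →* L i),
        Function.Surjective ψ ∧
        ∀ (p : P i) (x : P i ⧸ (incl i).range), e (p • x) = ψ p • e x) := by
  choose P gP incl ψ hfin hemb hcond using hP
  refine ⟨P, gP, incl, fun i => (hemb i).injective, hfin,
    fun N hN => hC N fun i => hcond i N (hN i), fun i => ?_⟩
  obtain ⟨e, he⟩ := (hemb i).exists_equiv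
  exact ⟨e, ψ i, (hemb i).surjective, he⟩

theorem mulAutArrow_apply_apply_eq {G A M : Type} [Group G] [MulAction G A] [Monoid M] (g : G)
    (u : A → M) (a : A) : mulAutArrow g u a = u (g⁻¹ • a) :=
  rfl

abbrev Wreath (M Ω G : Type) [Group M] [Group G] [MulAction G Ω] : Type :=
  (Ω → M) ⋊[mulAutArrow] G

namespace Wreath

variable {M Ω G G' : Type} [Group M] [Group G] [Group G'] [MulAction G Ω] [MulAction G' Ω]

instance [Finite M] [Finite Ω] [Finite G] : Finite (Wreath M Ω G) :=
  Finite.of_equiv _ SemidirectProduct.equivProd.symm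

def map (f : G →* G') (hf : ∀ g (ω : Ω), f g • ω = g • ω) : Wreath M Ω G →* Wreath M Ω G' :=
  SemidirectProduct.map (MonoidHom.id _) f fun g => by
    ext u ω
    simp only [MonoidHom.coe_comp, Function.comp_apply, MulEquiv.coe_toMonoidHom,
      MonoidHom.id_apply, mulAutArrow_apply_apply_eq, ← map_inv, hf]

variable {f : G →* G'} {hf : ∀ g (ω : Ω), f g • ω = g • ω}

theorem map_injective (hinj : Function.Injective f) : Function.Injective (map (M := M) f hf) :=
  fun _ _ h => SemidirectProduct.ext (congrArg SemidirectProduct.left h :)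
    (hinj (congrArg SemidirectProduct.right h :))

theorem range_map : (map (M := M) f hf).range = f.range.comap rightHom := by
  ext w
  constructor
  · rintro ⟨w, rfl⟩
    exact ⟨w.right, rfl⟩
  · rintro ⟨g, hg⟩
    exact ⟨⟨w.left, g⟩, SemidirectProduct.ext rfl hg⟩

theorem _root_.IsPreimageEmbedding.wreathMap {L : Type} [Group L] {π : G' →* L} {H : Subgroup L}
    (h : IsPreimageEmbedding f π H) :
    IsPreimageEmbedding (map (M := M) f hf) (π.comp rightHom) H where
  injective := map_injective h.injective
  surjective := h.surjective.comp rightHom_surjective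
  range_eq := by rw [range_map, h.range_eq, Subgroup.comap_comap]

theorem inl_mem_of_normal_map (hinj : Function.Injective f) {N : Subgroup (Wreath M Ω G)}
    (hN : (N.map (map f hf)).Normal) (g : G') {u : Ω → M} (hu : inl u ∈ N) :
    inl (mulAutArrow g u) ∈ N := by
  have hconj : map f hf (inl (mulAutArrow g u)) = inr g * map f hf (inl u) * (inr g)⁻¹ := by
    simp only [map, map_inl, MonoidHom.id_apply, inl_aut, map_inv]
  obtain ⟨v, hv, hvu⟩ := hconj ▸ hN.conj_mem _ ⟨_, hu, rfl⟩ (inr g)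
  rwa [map_injective hinj hvu] at hv

def complFixedPoint {ω₀ : Ω} (h : ∀ g : G, g • ω₀ = ω₀) : SubMulAction G Ω where
  carrier := {ω₀}ᶜ
  smul_mem' g _ hω e := hω (smul_left_cancel g (e.trans (h g).symm))

open scoped Classical in
noncomputable def splitAt {ω₀ : Ω} (h : ∀ g : G, g • ω₀ = ω₀) :
    Wreath M Ω G ≃* M × Wreath M (complFixedPoint h) G where
  toFun w := (w.left ω₀, ⟨fun ω => w.left ω, w.right⟩)
  invFun w := ⟨fun ω => if hω : ω = ω₀ then w.1 else w.2.left ⟨ω, hω⟩, w.2.right⟩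
  left_inv w := by
    ext ω
    · by_cases hω : ω = ω₀ <;> simp [hω]
    · rfl
  right_inv w := by
    ext ω
    · simp
    · exact dif_neg ω.2
    · rfl
  map_mul' w w' := by
    ext
    · show w.left ω₀ * w'.left (w.right⁻¹ • ω₀) = w.left ω₀ * w'.left ω₀
      rw [h]
    · rfl
    · rfl

end Wreath

@[ext]
structure Omega {L₂ L₃ : Type} [Group L₂] [Group L₃] (l : ℕ) (H₂ : Subgroup L₂)
    (H₃ : Subgroup L₃) where
  n : ZMod l
  x : L₂ ⧸ H₂
  y : L₃ ⧸ H₃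

namespace Omega

variable {L₂ L₃ : Type} [Group L₂] [Group L₃] {l : ℕ} {H₂ : Subgroup L₂} {H₃ : Subgroup L₃}

instance [NeZero l] [Finite L₂] [Finite L₃] : Finite (Omega l H₂ H₃) :=
  Finite.of_injective (fun ω => (ω.n, ω.x, ω.y)) fun _ _ h => by
    simp only [Prod.mk.injEq] at h
    exact Omega.ext h.1 h.2.1 h.2.2

def base : Omega l H₂ H₃ := ⟨0, (1 : L₂), (1 : L₃)⟩

open scoped Classical in
/-- `L₂` shifts the level `n` by the coboundary of `twist`, so that `n - twist x y` is
`L₂`-invariant. As `twist` is constant along `H₂`-orbits in `x` and `H₃`-orbits in `y`, the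
stabilisers `H₂` and `H₃` commute with `L₃` and `L₂` respectively. -/
noncomputable def twist (x : L₂ ⧸ H₂) (y : L₃ ⧸ H₃) : ZMod l :=
  if x ≠ (1 : L₂) ∧ y = (1 : L₃) then 1 else 0

theorem twist_smul_left {h : L₂} (hh : h ∈ H₂) (x : L₂ ⧸ H₂) (y : L₃ ⧸ H₃) :
    twist (l := l) (h • x) y = twist x y := by
  classical
  simp only [twist, ne_eq, QuotientGroup.smul_eq_mk_one_iff hh]

theorem twist_smul_right {h : L₃} (hh : h ∈ H₃) (x : L₂ ⧸ H₂) (y : L₃ ⧸ H₃) :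
    twist (l := l) x (h • y) = twist x y := by
  classical
  simp only [twist, ne_eq, QuotientGroup.smul_eq_mk_one_iff hh]

noncomputable instance : SMul L₂ (Omega l H₂ H₃) where
  smul g ω := ⟨ω.n - twist ω.x ω.y + twist (g • ω.x) ω.y, g • ω.x, ω.y⟩

instance : SMul L₃ (Omega l H₂ H₃) where
  smul g ω := ⟨ω.n, ω.x, g • ω.y⟩

theorem smul_def₂ (g : L₂) (ω : Omega l H₂ H₃) :
    g • ω = ⟨ω.n - twist ω.x ω.y + twist (g • ω.x) ω.y, g • ω.x, ω.y⟩ :=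
  rfl

theorem smul_def₃ (g : L₃) (ω : Omega l H₂ H₃) : g • ω = ⟨ω.n, ω.x, g • ω.y⟩ :=
  rfl

noncomputable instance : MulAction L₂ (Omega l H₂ H₃) where
  one_smul ω := by simp [smul_def₂]
  mul_smul g h ω := by
    simp only [smul_def₂, mul_smul, Omega.mk.injEq, and_true]
    ring

instance : MulAction L₃ (Omega l H₂ H₃) where
  one_smul ω := by simp [smul_def₃]
  mul_smul g h ω := by simp [smul_def₃, mul_smul]

instance : SMulCommClass L₂ H₃ (Omega l H₂ H₃) where
  smul_comm g h ω := by
    simp only [Subgroup.smul_def, smul_def₂, smul_def₃, twist_smul_right h.2]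

instance : SMulCommClass H₂ L₃ (Omega l H₂ H₃) where
  smul_comm h g ω := by
    simp only [Subgroup.smul_def, smul_def₂, smul_def₃, twist_smul_left h.2, sub_add_cancel]

noncomputable instance : MulAction (H₂ × H₃) (Omega l H₂ H₃) := .prodOfSMulCommClass _ _ _

noncomputable instance : MulAction (L₂ × H₃) (Omega l H₂ H₃) := .prodOfSMulCommClass _ _ _

noncomputable instance : MulAction (H₂ × L₃) (Omega l H₂ H₃) := .prodOfSMulCommClass _ _ _

theorem prod_smul₂ (g : L₂) (h : H₃) (ω : Omega l H₂ H₃) : (g, h) • ω = g • h • ω :=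
  rfl

theorem prod_smul₃ (h : H₂) (g : L₃) (ω : Omega l H₂ H₃) : (h, g) • ω = h • g • ω :=
  rfl

theorem smul_base (κ : H₂ × H₃) : κ • (base : Omega l H₂ H₃) = base := by
  obtain ⟨⟨h₂, hh₂⟩, ⟨h₃, hh₃⟩⟩ := κ
  change h₂ • h₃ • (base : Omega l H₂ H₃) = base
  simp [base, smul_def₂, smul_def₃, twist, QuotientGroup.mk_eq_mk_one_iff, hh₂, hh₃]

theorem forall_mem_of_smul_mem [NeZero l] (hH₂ : H₂ ≠ ⊤) (hH₃ : H₃ ≠ ⊤) {T : Set (Omega l H₂ H₃)}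
    (h₀ : base ∈ T) (h₂ : ∀ g : L₂, ∀ ω ∈ T, g • ω ∈ T) (h₃ : ∀ g : L₃, ∀ ω ∈ T, g • ω ∈ T)
    (ω : Omega l H₂ H₃) : ω ∈ T := by
  obtain ⟨g₂, hg₂⟩ : ∃ g₂, g₂ ∉ H₂ := by simpa [Subgroup.eq_top_iff'] using hH₂
  obtain ⟨g₃, hg₃⟩ : ∃ g₃, g₃ ∉ H₃ := by simpa [Subgroup.eq_top_iff'] using hH₃
  -- the commutator of `g₂` and `g₃` raises the level `n` on the fibre over the base cosets
  have hstep : ∀ n : ZMod l, ⟨n, (1 : L₂), (1 : L₃)⟩ ∈ T → ⟨n + 1, (1 : L₂), (1 : L₃)⟩ ∈ T := by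
    intro n hn
    convert h₃ g₃⁻¹ _ (h₂ g₂⁻¹ _ (h₃ g₃ _ (h₂ g₂ _ hn))) using 1
    simp [smul_def₂, smul_def₃, twist, QuotientGroup.mk_eq_mk_one_iff, hg₂, hg₃]
  have hbase : ∀ n : ZMod l, ⟨n, (1 : L₂), (1 : L₃)⟩ ∈ T := by
    intro n
    obtain ⟨m, rfl⟩ := ZMod.natCast_zmod_surjective n
    induction m with
    | zero => simpa [base] using h₀
    | succ m ih => simpa using hstep _ ih
  obtain ⟨n, x, y⟩ := ω
  obtain ⟨g, rfl⟩ := exists_smul_eq L₂ ((1 : L₂) : L₂ ⧸ H₂) x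
  obtain ⟨h, rfl⟩ := exists_smul_eq L₃ ((1 : L₃) : L₃ ⧸ H₃) y
  convert h₃ h _ (h₂ g _ (hbase (n - twist (g • ((1 : L₂) : L₂ ⧸ H₂)) ((1 : L₃) : L₃ ⧸ H₃))))
    using 1
  simp [smul_def₂, smul_def₃, twist]

end Omega

namespace RankThree

variable {L₁ L₂ L₃ : Type} [Group L₁] [Group L₂] [Group L₃] (l : ℕ) (H₁ : Subgroup L₁)
  (H₂ : Subgroup L₂) (H₃ : Subgroup L₃)

abbrev Borel : Type := Wreath H₁ (Omega l H₂ H₃) (H₂ × H₃)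

abbrev P₁ : Type :=
  L₁ × Wreath H₁ (Wreath.complFixedPoint (Omega.smul_base (l := l) (H₂ := H₂) (H₃ := H₃)))
    (H₂ × H₃)

abbrev P₂ : Type := Wreath H₁ (Omega l H₂ H₃) (L₂ × H₃)

abbrev P₃ : Type := Wreath H₁ (Omega l H₂ H₃) (H₂ × L₃)

noncomputable def incl₁ : Borel l H₁ H₂ H₃ →* P₁ l H₁ H₂ H₃ :=
  (H₁.subtype.prodMap (MonoidHom.id _)).comp (Wreath.splitAt Omega.smul_base).toMonoidHom

noncomputable def incl₂ : Borel l H₁ H₂ H₃ →* P₂ l H₁ H₂ H₃ :=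
  Wreath.map (H₂.subtype.prodMap (MonoidHom.id H₃)) fun _ _ => rfl

noncomputable def incl₃ : Borel l H₁ H₂ H₃ →* P₃ l H₁ H₂ H₃ :=
  Wreath.map ((MonoidHom.id H₂).prodMap H₃.subtype) fun _ _ => rfl

theorem isPreimageEmbedding_incl₁ :
    IsPreimageEmbedding (incl₁ l H₁ H₂ H₃) ((MonoidHom.id L₁).comp (MonoidHom.fst _ _)) H₁ :=
  ((isPreimageEmbedding_subtype H₁).prodMap_id _).comp_mulEquiv _

theorem isPreimageEmbedding_incl₂ :
    IsPreimageEmbedding (incl₂ l H₁ H₂ H₃)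
      (((MonoidHom.id L₂).comp (MonoidHom.fst L₂ H₃)).comp SemidirectProduct.rightHom) H₂ :=
  ((isPreimageEmbedding_subtype H₂).prodMap_id H₃).wreathMap

theorem isPreimageEmbedding_incl₃ :
    IsPreimageEmbedding (incl₃ l H₁ H₂ H₃)
      (((MonoidHom.id L₃).comp (MonoidHom.snd H₂ L₃)).comp SemidirectProduct.rightHom) H₃ :=
  ((isPreimageEmbedding_subtype H₃).id_prodMap H₂).wreathMap

variable {l H₁ H₂ H₃}

theorem eq_bot_of_normal [NeZero l] (hH₁ : H₁.normalCore = ⊥) (hH₂ : H₂.normalCore = ⊥)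
    (hH₃ : H₃.normalCore = ⊥) (hH₂top : H₂ ≠ ⊤) (hH₃top : H₃ ≠ ⊤)
    {N : Subgroup (Borel l H₁ H₂ H₃)} (h₁ : (N.map (incl₁ l H₁ H₂ H₃)).Normal)
    (h₂ : (N.map (incl₂ l H₁ H₂ H₃)).Normal) (h₃ : (N.map (incl₃ l H₁ H₂ H₃)).Normal) :
    N = ⊥ := by
  have hright : ∀ n ∈ N, n.right = 1 := fun n hn =>
    Prod.ext (Subtype.ext ((isPreimageEmbedding_incl₂ l H₁ H₂ H₃).map_eq_one hH₂ h₂ hn))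
      (Subtype.ext ((isPreimageEmbedding_incl₃ l H₁ H₂ H₃).map_eq_one hH₃ h₃ hn))
  have hleft : ∀ n ∈ N, n.left Omega.base = 1 := fun n hn =>
    Subtype.ext ((isPreimageEmbedding_incl₁ l H₁ H₂ H₃).map_eq_one hH₁ h₁ hn)
  have hT : ∀ ω, ∀ u, SemidirectProduct.inl u ∈ N → u ω = 1 := by
    refine Omega.forall_mem_of_smul_mem hH₂top hH₃top (fun u hu => hleft _ hu) ?_ ?_
    · intro g ω hω u hu
      simpa only [mulAutArrow_apply_apply_eq, Prod.inv_mk, inv_inv, inv_one, Omega.prod_smul₂,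
        one_smul] using hω _ (Wreath.inl_mem_of_normal_map
          (H₂.subtype_injective.prodMap Function.injective_id) h₂ ((g⁻¹, 1) : L₂ × H₃) hu)
    · intro g ω hω u hu
      simpa only [mulAutArrow_apply_apply_eq, Prod.inv_mk, inv_inv, inv_one, Omega.prod_smul₃,
        one_smul] using hω _ (Wreath.inl_mem_of_normal_map
          (Function.injective_id.prodMap H₃.subtype_injective) h₃ ((1, g⁻¹) : H₂ × L₃) hu)
  refine (Subgroup.eq_bot_iff_forall N).2 fun n hn => ?_
  have hn' : n = SemidirectProduct.inl n.left := SemidirectProduct.ext rfl (hright n hn)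
  rw [hn', funext fun ω => hT ω n.left (hn' ▸ hn)]
  exact map_one _

theorem lt_card [NeZero l] [Finite L₁] [Finite L₂] [Finite L₃] (hH₁ : H₁ ≠ ⊥) :
    l < Nat.card (Borel l H₁ H₂ H₃) := by
  have : Nontrivial H₁ := (Subgroup.nontrivial_iff_ne_bot H₁).mpr hH₁
  calc l = Nat.card (ZMod l) := (Nat.card_zmod l).symm
    _ ≤ Nat.card (Omega l H₂ H₃) :=
      Nat.card_le_card_of_injective (fun n => ⟨n, (1 : L₂), (1 : L₃)⟩) fun _ _ h =>
        congrArg Omega.n h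
    _ < 2 ^ Nat.card (Omega l H₂ H₃) := Nat.lt_two_pow_self
    _ ≤ Nat.card (Omega l H₂ H₃ → H₁) := by
      rw [Nat.card_fun]
      exact Nat.pow_le_pow_left Finite.one_lt_card _
    _ ≤ Nat.card (Borel l H₁ H₂ H₃) :=
      Nat.card_le_card_of_injective _ SemidirectProduct.inl_injective

end RankThree

section DirectFactor

variable {J : Type} [DecidableEq J] {L : J → Type} [∀ j, Group (L j)] (H : ∀ j, Subgroup (L j))

def piSplitIncl (j : J) : (∀ i, H i) →* L j × ∀ i : {i // i ≠ j}, H i :=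
  ((H j).subtype.prodMap (MonoidHom.id _)).comp (MulEquiv.piSplitAt j fun i => H i).toMonoidHom

theorem isPreimageEmbedding_piSplitIncl (j : J) :
    IsPreimageEmbedding (piSplitIncl H j) ((MonoidHom.id (L j)).comp (MonoidHom.fst _ _)) (H j) :=
  ((isPreimageEmbedding_subtype (H j)).prodMap_id _).comp_mulEquiv _

theorem eq_bot_of_normal_map_piSplitIncl (hH : ∀ j, (H j).normalCore = ⊥)
    {N : Subgroup (∀ j, H j)} (hN : ∀ j, (N.map (piSplitIncl H j)).Normal) : N = ⊥ :=
  (Subgroup.eq_bot_iff_forall N).2 fun _ hn => funext fun j =>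
    Subtype.ext ((isPreimageEmbedding_piSplitIncl H j).map_eq_one (hH j) (hN j) hn)

end DirectFactor

namespace Amalgam

variable {ι : Type} [DecidableEq ι] {L : ι → Type} [∀ i, Group (L i)] (l : ℕ)
  (H : ∀ i, Subgroup (L i))

abbrev Others (i₁ i₂ i₃ : ι) : Type := {j // j ≠ i₁ ∧ j ≠ i₂ ∧ j ≠ i₃}

abbrev Borel (i₁ i₂ i₃ : ι) : Type :=
  RankThree.Borel l (H i₁) (H i₂) (H i₃) × ∀ j : Others i₁ i₂ i₃, H j

variable {i₁ i₂ i₃ : ι}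

/-- The parabolics at different indices have different types, so what normality in the `i`-th
one says about `N` is recorded by cases on the position of `i`. -/
def IsNormalInParabolic (i : ι) (N : Subgroup (Borel l H i₁ i₂ i₃)) : Prop :=
  (i = i₁ → (N.map ((RankThree.incl₁ l _ _ _).prodMap (MonoidHom.id _))).Normal) ∧
  (i = i₂ → (N.map ((RankThree.incl₂ l _ _ _).prodMap (MonoidHom.id _))).Normal) ∧
  (i = i₃ → (N.map ((RankThree.incl₃ l _ _ _).prodMap (MonoidHom.id _))).Normal) ∧
  ∀ h : i ≠ i₁ ∧ i ≠ i₂ ∧ i ≠ i₃,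
    (N.map ((MonoidHom.id _).prodMap (piSplitIncl (fun j : Others i₁ i₂ i₃ => H j) ⟨i, h⟩))).Normal

variable {l H}

theorem eq_bot_of_isNormalInParabolic [NeZero l] (hH : ∀ i, (H i).normalCore = ⊥)
    (hH₂ : H i₂ ≠ ⊤) (hH₃ : H i₃ ≠ ⊤) {N : Subgroup (Borel l H i₁ i₂ i₃)}
    (hN : ∀ i, IsNormalInParabolic l H i N) : N = ⊥ :=
  Subgroup.eq_bot_of_map_fst_of_map_snd
    (RankThree.eq_bot_of_normal (hH i₁) (hH i₂) (hH i₃) hH₂ hH₃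
      ((hN i₁).1 rfl).map_fst_of_map_prodMap ((hN i₂).2.1 rfl).map_fst_of_map_prodMap
      ((hN i₃).2.2.1 rfl).map_fst_of_map_prodMap)
    (eq_bot_of_normal_map_piSplitIncl _ (fun j => hH j.1)
      fun j => ((hN j.1).2.2.2 j.2).map_snd_of_map_prodMap)

theorem exists_parabolic [Finite ι] [NeZero l] [∀ i, Finite (L i)] (h₁₂ : i₁ ≠ i₂) (h₁₃ : i₁ ≠ i₃)
    (h₂₃ : i₂ ≠ i₃) (i : ι) :
    ∃ (P : Type) (_ : Group P) (incl : Borel l H i₁ i₂ i₃ →* P) (ψ : P →* L i),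
      Finite P ∧ IsPreimageEmbedding incl ψ (H i) ∧
      ∀ N, (N.map incl).Normal → IsNormalInParabolic l H i N := by
  by_cases hi₁ : i = i₁
  · subst hi₁
    exact ⟨_, _, _, _, inferInstance, (RankThree.isPreimageEmbedding_incl₁ _ _ _ _).prodMap_id _,
      fun N hN => ⟨fun _ => hN, fun h => (h₁₂ h).elim, fun h => (h₁₃ h).elim,
        fun h => (h.1 rfl).elim⟩⟩
  by_cases hi₂ : i = i₂
  · subst hi₂
    exact ⟨_, _, _, _, inferInstance, (RankThree.isPreimageEmbedding_incl₂ _ _ _ _).prodMap_id _,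
      fun N hN => ⟨fun h => (hi₁ h).elim, fun _ => hN, fun h => (h₂₃ h).elim,
        fun h => (h.2.1 rfl).elim⟩⟩
  by_cases hi₃ : i = i₃
  · subst hi₃
    exact ⟨_, _, _, _, inferInstance, (RankThree.isPreimageEmbedding_incl₃ _ _ _ _).prodMap_id _,
      fun N hN => ⟨fun h => (hi₁ h).elim, fun h => (hi₂ h).elim, fun _ => hN,
        fun h => (h.2.2 rfl).elim⟩⟩
  exact ⟨_, _, _, _, inferInstance,
    (isPreimageEmbedding_piSplitIncl (fun j : Others i₁ i₂ i₃ => H j) ⟨i, hi₁, hi₂, hi₃⟩).id_prodMap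
      _,
    fun N hN => ⟨fun h => (hi₁ h).elim, fun h => (hi₂ h).elim, fun h => (hi₃ h).elim,
      fun _ => hN⟩⟩

end Amalgam

theorem exists_faithful_amalgam_le_card {ι : Type} [Finite ι] (L Y : ι → Type) [∀ i, Group (L i)]
    [∀ i, MulAction (L i) (Y i)] [∀ i, FaithfulSMul (L i) (Y i)]
    [∀ i, IsPretransitive (L i) (Y i)] [∀ i, Finite (L i)] [∀ i, Nontrivial (L i)]
    {i₁ i₂ i₃ : ι} (h₁₂ : i₁ ≠ i₂) (h₁₃ : i₁ ≠ i₃) (h₂₃ : i₂ ≠ i₃)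
    (hnotreg : ∃ x : Y i₁, stabilizer (L i₁) x ≠ ⊥) (c : ℕ) :
    ∃ (P : ι → Type) (_ : ∀ i, Group (P i)) (B : Type) (_ : Group B) (_ : Fintype B)
      (incl : ∀ i, B →* P i),
      (∀ i, Function.Injective (incl i)) ∧ (∀ i, Finite (P i)) ∧
      (∀ N : Subgroup B, (∀ i, (N.map (incl i)).Normal) → N = ⊥) ∧
      (∀ i, ∃ (e : (P i ⧸ (incl i).range) ≃ Y i) (ψ : P i →* L i),
        Function.Surjective ψ ∧
        ∀ (p : P i) (x : P i ⧸ (incl i).range), e (p • x) = ψ p • e x) ∧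
      c ≤ Fintype.card B := by
  classical
  obtain ⟨x, hx⟩ := hnotreg
  have (i : ι) : Nonempty (Y i) := nonempty_of_faithfulSMul (L i) (Y i)
  let y : ∀ i, Y i := Function.update (fun i => Classical.arbitrary (Y i)) i₁ x
  let H i := stabilizer (L i) (y i)
  have hH : ∀ i, (H i).normalCore = ⊥ := fun i => MulAction.normalCore_stabilizer_eq_bot (y i)
  obtain ⟨P, gP, incl, hinj, hfin, hfaith, htype⟩ := exists_amalgam_of_pieces y _
    (fun _ => Amalgam.eq_bot_of_isNormalInParabolic (l := c + 1) hH
      (Subgroup.ne_top_of_normalCore_eq_bot (hH i₂))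
      (Subgroup.ne_top_of_normalCore_eq_bot (hH i₃)))
    (Amalgam.exists_parabolic h₁₂ h₁₃ h₂₃)
  refine ⟨P, gP, _, _, Fintype.ofFinite _, incl, hinj, hfin, hfaith, htype, ?_⟩
  rw [Fintype.card_eq_nat_card]
  calc c ≤ c + 1 := c.le_succ
    _ ≤ Nat.card (RankThree.Borel (c + 1) (H i₁) (H i₂) (H i₃)) :=
      (RankThree.lt_card (by simpa [H, y] using hx)).le
    _ ≤ Nat.card (Amalgam.Borel (c + 1) H i₁ i₂ i₃) :=
      Nat.card_le_card_of_injective _ (Prod.mk_left_injective 1)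

theorem stmt16_general (k : ℕ) (hk : 3 ≤ k) (Li : Fin k → Type) (Ωi : Fin k → Type)
    [∀ i, Group (Li i)] [∀ i, MulAction (Li i) (Ωi i)]
    [∀ i, FaithfulSMul (Li i) (Ωi i)] [∀ i, MulAction.IsPretransitive (Li i) (Ωi i)]
    [∀ i, Finite (Li i)]
    (hnontriv : ∀ i, Nontrivial (Li i))
    (i₀ : Fin k) (hi₀ : (i₀ : ℕ) = 0)
    (hnotreg : ∃ x : Ωi i₀, MulAction.stabilizer (Li i₀) x ≠ ⊥)
    (c : ℕ) :
    ∃ (P : Fin k → Type) (gP : ∀ i, Group (P i)) (B : Type) (gB : Group B) (fB : Fintype B)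
      (incl : ∀ i, B →* P i),
      (∀ i, Function.Injective (incl i)) ∧ (∀ i, Finite (P i)) ∧
      (∀ N : Subgroup B, (∀ i, (N.map (incl i)).Normal) → N = ⊥) ∧
      (∀ i, ∃ (e : (P i ⧸ (incl i).range) ≃ Ωi i) (ψ : P i →* Li i),
        Function.Surjective ψ ∧
        ∀ (p : P i) (x : P i ⧸ (incl i).range), e (p • x) = ψ p • e x) ∧
      c ≤ Fintype.card B := by
  have := hnontriv
  exact exists_faithful_amalgam_le_card Li Ωi (i₂ := ⟨1, by omega⟩) (i₃ := ⟨2, by omega⟩)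
    (Fin.ne_of_val_ne (by simp [hi₀])) (Fin.ne_of_val_ne (by simp [hi₀]))
    (Fin.ne_of_val_ne (by simp)) hnotreg c

/-- Theorem 1.7, hard direction: if `k ≥ 3` and `L₁,…,L_k` are nontrivial finite transitive
permutation groups with `L₁` not regular, then for every `c` there is a rank-`k` faithful
amalgam of permutation type `[L₁,…,L_k]` whose Borel subgroup has order at least `c`.
An amalgam is encoded by finite groups `P i` with a common subgroup `B` (via injective
inclusions); faithfulness says only the trivial subgroup of `B` is normalised by every `P i`;
the permutation type condition says the action of `P i` on the cosets of `B` is permutation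
isomorphic, along a surjection `ψ i : P i →* L i`, to the action of `L i` on `Ω i`. -/
theorem stmt16 (k : ℕ) (hk : 3 ≤ k) (Li : Fin k → Type) (Ωi : Fin k → Type)
    [∀ i, Group (Li i)] [∀ i, MulAction (Li i) (Ωi i)] [∀ i, Fintype (Ωi i)]
    [∀ i, FaithfulSMul (Li i) (Ωi i)] [∀ i, MulAction.IsPretransitive (Li i) (Ωi i)]
    [∀ i, Finite (Li i)]
    (hnontriv : ∀ i, Nontrivial (Li i))
    (i₀ : Fin k) (hi₀ : (i₀ : ℕ) = 0)
    (hnotreg : ∃ x : Ωi i₀, MulAction.stabilizer (Li i₀) x ≠ ⊥)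
    (c : ℕ) :
    ∃ (P : Fin k → Type) (gP : ∀ i, Group (P i)) (B : Type) (gB : Group B) (fB : Fintype B)
      (incl : ∀ i, B →* P i),
      (∀ i, Function.Injective (incl i)) ∧ (∀ i, Finite (P i)) ∧
      (∀ N : Subgroup B, (∀ i, (N.map (incl i)).Normal) → N = ⊥) ∧
      (∀ i, ∃ (e : (P i ⧸ (incl i).range) ≃ Ωi i) (ψ : P i →* Li i),
        Function.Surjective ψ ∧
        ∀ (p : P i) (x : P i ⧸ (incl i).range), e (p • x) = ψ p • e x) ∧
      c ≤ Fintype.card B :=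
  stmt16_general k hk Li Ωi hnontriv i₀ hi₀ hnotreg c
end

section
/- Let 𝔗 be a connected bi-regular graph (every vertex in one part of the bipartition has valency d₁ ≥ 1 and every vertex in the other part has valency d₂ ≥ 1), and let K ≤ Aut(𝔗) be a group of automorphisms such that the quotient graph 𝔗/K is bi-regular with the same valencies d₁, d₂ (i.e., K maps no two distinct neighbours of any vertex to the same K-orbit). Then K acts semiregularly on the vertices of 𝔗. -/
/-! A group element fixing a vertex `v` permutes the neighbours of `v` within their `K`-orbits;
since these orbits are pairwise distinct, it fixes every neighbour of `v`. The fixed-point set is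
therefore closed under adjacency, hence everything by connectedness. -/

open MulAction

namespace SimpleGraph

variable {V : Type*} {G : SimpleGraph V}

lemma Reachable.mem_of_forall_adj_mem {s : Set V} (hs : ∀ ⦃a b⦄, G.Adj a b → a ∈ s → b ∈ s)
    {u v : V} (huv : G.Reachable u v) (hu : u ∈ s) : v ∈ s := by
  obtain ⟨p⟩ := huv
  induction p with
  | nil => exact hu
  | cons hadj _ ih => exact ih (hs hadj hu)

lemma smul_eq_self_of_adj {K : Type*} [Group K] [MulAction K V] {g : K} {a b : V}
    (hg : ∀ x y, G.Adj x y → G.Adj (g • x) (g • y))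
    (horbit : ∀ x y, G.Adj a x → G.Adj a y → x ≠ y → orbit K x ≠ orbit K y)
    (hab : G.Adj a b) (ha : g • a = a) : g • b = b := by
  by_contra hne
  have hgb : G.Adj a (g • b) := ha ▸ hg a b hab
  exact horbit b (g • b) hab hgb (Ne.symm hne) (orbit_smul g b).symm

end SimpleGraph

theorem stmt18_general {V : Type*} (Γ : SimpleGraph V) (hconn : Γ.Connected)
    {K : Type*} [Group K] [MulAction K V]
    (hact : ∀ (g : K) (a b : V), Γ.Adj a b → Γ.Adj (g • a) (g • b))
    (hfaith : ∀ g : K, (∀ v : V, g • v = v) → g = 1)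
    (hquot : ∀ (v a b : V), Γ.Adj v a → Γ.Adj v b → a ≠ b →
      MulAction.orbit K a ≠ MulAction.orbit K b) :
    ∀ g : K, (∃ v : V, g • v = v) → g = 1 := by
  rintro g ⟨v, hv⟩
  have hclosed : ∀ ⦃a b⦄, Γ.Adj a b → a ∈ fixedBy V g → b ∈ fixedBy V g :=
    fun a _ hab ha ↦ SimpleGraph.smul_eq_self_of_adj (hact g) (hquot a) hab ha
  exact hfaith g fun w ↦ (hconn v w).mem_of_forall_adj_mem hclosed hv

/-- If `𝔗` is a connected bi-regular graph and `K` a group of automorphisms such that the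
quotient graph is bi-regular with the same valencies (i.e. no two distinct neighbours of a
vertex lie in the same `K`-orbit), then `K` is semiregular on the vertices. -/
theorem stmt18 {V : Type*} (Γ : SimpleGraph V) (hconn : Γ.Connected)
    [∀ v, Fintype (Γ.neighborSet v)]
    (part : V → Bool) (hbip : ∀ a b : V, Γ.Adj a b → part a ≠ part b)
    (d₁ d₂ : ℕ) (hd₁ : 1 ≤ d₁) (hd₂ : 1 ≤ d₂)
    (hdeg : ∀ v : V, Γ.degree v = if part v then d₁ else d₂)
    {K : Type*} [Group K] [MulAction K V]
    (hact : ∀ (g : K) (a b : V), Γ.Adj a b → Γ.Adj (g • a) (g • b))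
    (hfaith : ∀ g : K, (∀ v : V, g • v = v) → g = 1)
    (hquot : ∀ (v a b : V), Γ.Adj v a → Γ.Adj v b → a ≠ b →
      MulAction.orbit K a ≠ MulAction.orbit K b) :
    ∀ g : K, (∃ v : V, g • v = v) → g = 1 :=
  stmt18_general Γ hconn hact hfaith hquot
end
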